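/- Let ω : [0, ∞) → ℝ be nonnegative, nondecreasing, concave and differentiable with ω'(ε) > 0 for ε in the relevant range, and σ > 0. Let ε_MSE > 0 solve ε²/(ε² + σ²) = ω'(ε)·ε/ω(ε), and let ε* solve max_{ε ∈ [0, a*σ]} ω(ε)·Φ(−ε/σ). Then ε* < ε_MSE. -/

import Mathlib

/-!
Suppose `ε_MSE ≤ ε*`. The MSE equation says `ω(ε_MSE)/ω'(ε_MSE) = (ε_MSE² + σ²)/ε_MSE ≥ 2σ`, and
since `ω` is nondecreasing with antitone derivative this ratio bound persists at `ε*`. Writing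
`x = ε*/σ`, the derivative of `ε ↦ ω(ε)·Φ(−ε/σ)` at `ε*` is `ω'(ε*)·Φ(−x) − ω(ε*)·φ(x)/σ`,
which is negative because `Φ(−x) < 2φ(x)` for `x ≥ 0`. So the objective strictly increases just
to the left of `ε* > 0`, inside `[0, a*σ]`, contradicting maximality.
-/

/-- The density of the standard normal distribution. -/
noncomputable def stdGaussianPDF (x : ℝ) : ℝ :=
  (Real.sqrt (2 * Real.pi))⁻¹ * Real.exp (-(x ^ 2) / 2)

/-- The cumulative distribution function of the standard normal distribution. -/
noncomputable def stdGaussianCDF (x : ℝ) : ℝ :=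
  ∫ t in Set.Iic x, stdGaussianPDF t

open Real MeasureTheory Set Filter Topology ProbabilityTheory

lemma stdGaussianPDF_eq_gaussianPDFReal : stdGaussianPDF = gaussianPDFReal 0 1 := by
  ext x
  simp [stdGaussianPDF, gaussianPDFReal]

lemma stdGaussianPDF_pos (x : ℝ) : 0 < stdGaussianPDF x := by
  rw [stdGaussianPDF_eq_gaussianPDFReal]
  exact gaussianPDFReal_pos _ _ _ one_ne_zero

lemma stdGaussianPDF_neg (x : ℝ) : stdGaussianPDF (-x) = stdGaussianPDF x := by
  simp [stdGaussianPDF]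

lemma integrable_stdGaussianPDF : Integrable stdGaussianPDF := by
  rw [stdGaussianPDF_eq_gaussianPDFReal]
  exact integrable_gaussianPDFReal _ _

lemma integral_stdGaussianPDF : ∫ x, stdGaussianPDF x = 1 := by
  rw [stdGaussianPDF_eq_gaussianPDFReal]
  exact integral_gaussianPDFReal_eq_one _ one_ne_zero

lemma continuous_stdGaussianPDF : Continuous stdGaussianPDF := by
  unfold stdGaussianPDF
  fun_prop

lemma integrable_mul_stdGaussianPDF : Integrable fun x => x * stdGaussianPDF x := by
  convert (integrable_mul_exp_neg_mul_sq (b := 1 / 2) (by norm_num)).const_mul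
    (√(2 * π))⁻¹ using 2 with x
  simp only [stdGaussianPDF]
  ring_nf

lemma hasDerivAt_stdGaussianPDF (x : ℝ) :
    HasDerivAt stdGaussianPDF (-x * stdGaussianPDF x) x := by
  have hexponent : HasDerivAt (fun t : ℝ => -(t ^ 2) / 2) (-x) x :=
    ((hasDerivAt_pow 2 x).fun_neg.div_const 2).congr_deriv (by norm_num; ring)
  refine (hexponent.exp.const_mul (√(2 * π))⁻¹).congr_deriv ?_
  rw [stdGaussianPDF]
  ring

lemma tendsto_stdGaussianPDF_atTop : Tendsto stdGaussianPDF atTop (𝓝 0) := by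
  have h : Tendsto (fun t : ℝ => -t ^ 2 / 2) atTop atBot :=
    (tendsto_neg_atTop_atBot.comp (tendsto_pow_atTop two_ne_zero)).atBot_div_const two_pos
  have h' := (tendsto_exp_atBot.comp h).const_mul (√(2 * π))⁻¹
  rwa [mul_zero] at h'

lemma integral_Ioi_mul_stdGaussianPDF (x : ℝ) :
    ∫ t in Ioi x, t * stdGaussianPDF t = stdGaussianPDF x := by
  have h := integral_Ioi_of_hasDerivAt_of_tendsto' (f := fun t => -stdGaussianPDF t) (a := x)
    (fun t _ => by simpa using (hasDerivAt_stdGaussianPDF t).fun_neg)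
    integrable_mul_stdGaussianPDF.integrableOn (by simpa using tendsto_stdGaussianPDF_atTop.neg)
  rw [h]
  ring

lemma hasDerivAt_stdGaussianCDF (x : ℝ) : HasDerivAt stdGaussianCDF (stdGaussianPDF x) x := by
  have h : stdGaussianCDF = fun y => stdGaussianCDF 0 + ∫ t in (0 : ℝ)..y, stdGaussianPDF t := by
    ext y
    rw [← intervalIntegral.integral_Iic_sub_Iic integrable_stdGaussianPDF.integrableOn
      integrable_stdGaussianPDF.integrableOn, stdGaussianCDF, stdGaussianCDF]
    ring
  rw [h]
  exact ((continuous_stdGaussianPDF.integral_hasStrictDerivAt 0 x).hasDerivAt).const_add _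

lemma stdGaussianCDF_strictMono : StrictMono stdGaussianCDF :=
  strictMono_of_deriv_pos fun x => (hasDerivAt_stdGaussianCDF x).deriv ▸ stdGaussianPDF_pos x

lemma stdGaussianCDF_neg (x : ℝ) : stdGaussianCDF (-x) = ∫ t in Ioi x, stdGaussianPDF t := by
  simpa [stdGaussianCDF, stdGaussianPDF_neg] using integral_comp_neg_Iic (-x) stdGaussianPDF

lemma stdGaussianCDF_zero : stdGaussianCDF 0 = 1 / 2 := by
  have h := intervalIntegral.integral_Iic_add_Ioi (b := 0) integrable_stdGaussianPDF.integrableOn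
    integrable_stdGaussianPDF.integrableOn
  rw [integral_stdGaussianPDF, ← stdGaussianCDF_neg, neg_zero, ← stdGaussianCDF] at h
  linarith

lemma stdGaussianCDF_neg_le_div {x : ℝ} (hx : 0 < x) :
    stdGaussianCDF (-x) ≤ stdGaussianPDF x / x := calc
  stdGaussianCDF (-x) = ∫ t in Ioi x, stdGaussianPDF t := stdGaussianCDF_neg x
  _ ≤ ∫ t in Ioi x, x⁻¹ * (t * stdGaussianPDF t) := by
    refine setIntegral_mono_on integrable_stdGaussianPDF.integrableOn
      (integrable_mul_stdGaussianPDF.const_mul _).integrableOn measurableSet_Ioi fun t ht => ?_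
    rw [← mul_assoc, inv_mul_eq_div]
    exact le_mul_of_one_le_left (stdGaussianPDF_pos t).le ((one_le_div hx).2 (le_of_lt ht))
  _ = stdGaussianPDF x / x := by
    rw [integral_const_mul, integral_Ioi_mul_stdGaussianPDF, inv_mul_eq_div]

lemma quarter_lt_stdGaussianPDF {x : ℝ} (hx : x ^ 2 ≤ 1 / 4) : 1 / 4 < stdGaussianPDF x := by
  have hexp : 7 / 8 ≤ exp (-x ^ 2 / 2) := by linarith [add_one_le_exp (-x ^ 2 / 2)]
  have hsqrt : √(2 * π) < 7 / 2 := by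
    rw [sqrt_lt' (by norm_num)]
    linarith [pi_lt_four]
  have hsqrt_pos : 0 < √(2 * π) := by positivity
  rw [stdGaussianPDF, inv_mul_eq_div, lt_div_iff₀ hsqrt_pos]
  linarith

lemma stdGaussianCDF_neg_lt_two_mul {x : ℝ} (hx : 0 ≤ x) :
    stdGaussianCDF (-x) < 2 * stdGaussianPDF x := by
  rcases le_or_gt x (1 / 2) with hsmall | hlarge
  · have hcdf : stdGaussianCDF (-x) ≤ 1 / 2 :=
      stdGaussianCDF_zero ▸ stdGaussianCDF_strictMono.monotone (by linarith)
    linarith [quarter_lt_stdGaussianPDF (x := x) (by nlinarith)]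
  · calc stdGaussianCDF (-x) ≤ stdGaussianPDF x / x := stdGaussianCDF_neg_le_div (by linarith)
      _ < 2 * stdGaussianPDF x := by
        rw [div_lt_iff₀ (by linarith)]
        nlinarith [stdGaussianPDF_pos x]

lemma ConcaveOn.antitoneOn_of_hasDerivWithinAt {S : Set ℝ} {f f' : ℝ → ℝ}
    (hfc : ConcaveOn ℝ S f) (hf : ∀ x ∈ S, HasDerivWithinAt f (f' x) S x) : AntitoneOn f' S := by
  intro x hx y hy hxy
  rcases hxy.eq_or_lt with rfl | hlt
  · rfl
  · exact (hfc.le_slope_of_hasDerivWithinAt hx hy hlt (hf y hy)).trans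
      (hfc.slope_le_of_hasDerivWithinAt hx hy hlt (hf x hx))

lemma IsLocalMaxOn.hasDerivWithinAt_Iic_nonneg {f : ℝ → ℝ} {f' b : ℝ}
    (h : IsLocalMaxOn f (Iic b) b) (hf : HasDerivWithinAt f f' (Iic b) b) : 0 ≤ f' := by
  have hcone : (-1 : ℝ) ∈ posTangentConeAt (Iic b) b :=
    mem_posTangentConeAt_of_segment_subset
      ((convex_Iic b).segment_subset self_mem_Iic (by rw [mem_Iic]; linarith))
  simpa using h.hasFDerivWithinAt_nonpos hf.hasFDerivWithinAt hcone

lemma two_mul_mul_le_of_sq_div_eq {σ ε w d : ℝ} (hε : 0 < ε) (hd : 0 < d)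
    (h : ε ^ 2 / (ε ^ 2 + σ ^ 2) = d * ε / w) : 2 * σ * d ≤ w := by
  have hw : 0 < w := (div_pos_iff_of_pos_left (mul_pos hd hε)).1 (h ▸ by positivity)
  rw [div_eq_div_iff (by positivity) hw.ne'] at h
  have h' : ε * w = d * (ε ^ 2 + σ ^ 2) := mul_left_cancel₀ hε.ne' (by linear_combination h)
  nlinarith [sq_nonneg (ε - σ)]

lemma hasDerivAt_mul_stdGaussianCDF_neg_div {ω : ℝ → ℝ} {w' σ ε : ℝ} (hω : HasDerivAt ω w' ε) :
    HasDerivAt (fun ε => ω ε * stdGaussianCDF (-(ε / σ)))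
      (w' * stdGaussianCDF (-(ε / σ)) - ω ε * (stdGaussianPDF (ε / σ) / σ)) ε := by
  have hinner : HasDerivAt (fun ε : ℝ => -(ε / σ)) (-σ⁻¹) ε := by
    simpa using ((hasDerivAt_id ε).div_const σ).fun_neg
  have hcdf : HasDerivAt (fun ε => stdGaussianCDF (-(ε / σ)))
      (stdGaussianPDF (ε / σ) * -σ⁻¹) ε := by
    have h := (hasDerivAt_stdGaussianCDF (-(ε / σ))).comp ε hinner
    rwa [stdGaussianPDF_neg] at h
  refine (hω.fun_mul hcdf).congr_deriv ?_
  ring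

lemma mul_stdGaussianCDF_neg_lt {σ x d w : ℝ} (hσ : 0 < σ) (hx : 0 ≤ x) (hd : 0 < d)
    (h : 2 * σ * d ≤ w) : d * stdGaussianCDF (-x) < w * (stdGaussianPDF x / σ) := calc
  d * stdGaussianCDF (-x) < d * (2 * stdGaussianPDF x) :=
    mul_lt_mul_of_pos_left (stdGaussianCDF_neg_lt_two_mul hx) hd
  _ = 2 * σ * d * (stdGaussianPDF x / σ) := by field_simp
  _ ≤ w * (stdGaussianPDF x / σ) := by
    gcongr
    exact div_nonneg (stdGaussianPDF_pos x).le hσ.le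

theorem epsStar_lt_epsMSE_general (σ astar εMSE εstar : ℝ) (hσ : 0 < σ)
    (ω ω' : ℝ → ℝ)
    (hmono : MonotoneOn ω (Set.Ici 0))
    (hconc : ConcaveOn ℝ (Set.Ici 0) ω)
    (hderiv : ∀ ε ∈ Set.Ici (0 : ℝ), HasDerivWithinAt ω (ω' ε) (Set.Ici 0) ε)
    (hpos : ∀ ε ∈ Set.Ici (0 : ℝ), 0 < ω' ε)
    (hMSEpos : 0 < εMSE)
    (hMSEeq : εMSE ^ 2 / (εMSE ^ 2 + σ ^ 2) = ω' εMSE * εMSE / ω εMSE)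
    (hstarmem : εstar ∈ Set.Icc 0 (astar * σ))
    (hstarmax : ∀ ε ∈ Set.Icc 0 (astar * σ),
      ω ε * stdGaussianCDF (-(ε / σ)) ≤ ω εstar * stdGaussianCDF (-(εstar / σ))) :
    εstar < εMSE := by
  by_contra! hle
  have hstar_pos : 0 < εstar := hMSEpos.trans_le hle
  have hMSE : εMSE ∈ Ici (0 : ℝ) := hMSEpos.le
  have hstar : εstar ∈ Ici (0 : ℝ) := hstar_pos.le
  have hratio : 2 * σ * ω' εstar ≤ ω εstar := calc
    2 * σ * ω' εstar ≤ 2 * σ * ω' εMSE := by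
      gcongr
      exact hconc.antitoneOn_of_hasDerivWithinAt hderiv hMSE hstar hle
    _ ≤ ω εMSE := two_mul_mul_le_of_sq_div_eq hMSEpos (hpos _ hMSE) hMSEeq
    _ ≤ ω εstar := hmono hMSE hstar hle
  have hleft_max : IsLocalMaxOn (fun ε => ω ε * stdGaussianCDF (-(ε / σ))) (Iic εstar) εstar := by
    filter_upwards [Ioc_mem_nhdsLE hstar_pos] with ε hε
    exact hstarmax ε ⟨hε.1.le, hε.2.trans hstarmem.2⟩
  have hg := hasDerivAt_mul_stdGaussianCDF_neg_div (σ := σ)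
    ((hderiv εstar hstar).hasDerivAt (Ici_mem_nhds hstar_pos))
  have hg_nonneg := hleft_max.hasDerivWithinAt_Iic_nonneg hg.hasDerivWithinAt
  have hg_neg := mul_stdGaussianCDF_neg_lt hσ (div_pos hstar_pos hσ).le (hpos _ hstar) hratio
  linarith

/-- Let `ω` be nonnegative, nondecreasing, concave and differentiable on `[0, ∞)` with
positive derivative, `σ > 0`, and `a*` the unique maximizer of `a·Φ(−a)` on `[0, ∞)`.
If `ε_MSE > 0` solves `ε²/(ε² + σ²) = ω'(ε)·ε/ω(ε)` and `ε*` solves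
`max_{ε ∈ [0, a*σ]} ω(ε)·Φ(−ε/σ)`, then `ε* < ε_MSE`. -/
theorem epsStar_lt_epsMSE (σ astar εMSE εstar : ℝ) (hσ : 0 < σ)
    (hastar0 : 0 ≤ astar)
    (hmax : ∀ a, 0 ≤ a → a * stdGaussianCDF (-a) ≤ astar * stdGaussianCDF (-astar))
    (huniq : ∀ a, 0 ≤ a →
      (∀ b, 0 ≤ b → b * stdGaussianCDF (-b) ≤ a * stdGaussianCDF (-a)) → a = astar)
    (ω ω' : ℝ → ℝ)
    (hnonneg : ∀ ε ∈ Set.Ici (0 : ℝ), 0 ≤ ω ε)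
    (hmono : MonotoneOn ω (Set.Ici 0))
    (hconc : ConcaveOn ℝ (Set.Ici 0) ω)
    (hderiv : ∀ ε ∈ Set.Ici (0 : ℝ), HasDerivWithinAt ω (ω' ε) (Set.Ici 0) ε)
    (hpos : ∀ ε ∈ Set.Ici (0 : ℝ), 0 < ω' ε)
    (hMSEpos : 0 < εMSE)
    (hMSEeq : εMSE ^ 2 / (εMSE ^ 2 + σ ^ 2) = ω' εMSE * εMSE / ω εMSE)
    (hstarmem : εstar ∈ Set.Icc 0 (astar * σ))
    (hstarmax : ∀ ε ∈ Set.Icc 0 (astar * σ),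
      ω ε * stdGaussianCDF (-(ε / σ)) ≤ ω εstar * stdGaussianCDF (-(εstar / σ))) :
    εstar < εMSE :=
  epsStar_lt_epsMSE_general σ astar εMSE εstar hσ ω ω' hmono hconc hderiv hpos hMSEpos hMSEeq
    hstarmem hstarmax
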